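/- arXiv:1505.05211 — 3 statements merged into one kernel-verified Lean document; each statement's English description precedes it below -/
import Mathlib

section
/- For the LAST construction on an undirected weighted graph: given parameter alpha > 1, there exists a spanning tree T rooted at v0 such that (a) for every vertex v, the path weight from v0 to v in T is at most alpha times the shortest-path distance from v0 to v in G, and (b) the total weight of T is at most (1 + 2/(alpha - 1)) times the weight of a minimum spanning tree of G. -/
/-!
Let `d = d_G(v0, ·)` and fix a minimum spanning tree `TM`. Walk around `TM` along a tour through
every vertex, of weight `2 · w(TM)`, carrying a bound `D` on the root distance of the current
vertex in the subgraph built so far. Whenever `D > α · d z` at a vertex `z`, add a shortest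
`v0`–`z` path and reset `D := d z`. At a breakpoint `z`, `α · d z < d z' + ℓ`, where `z'` is the
previous breakpoint and `ℓ` the weight of the tour between them; summing, `(α - 1) · Σ d z` is at
most the weight of the tour, so the added paths weigh at most `2 · w(TM) / (α - 1)`. In the
subgraph `TM ∪ paths` every vertex is within `α · d` of the root, so a shortest-path tree of that
subgraph is the required tree, and it weighs no more than the subgraph.
-/

/-- A spanning tree (arborescence) rooted at `v0`, given by a parent map. -/
structure ArbTree (V : Type) (v0 : V) where
  parent : V → V
  root_fix : parent v0 = v0
  reaches : ∀ v, ∃ n, parent^[n] v = v0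

/-- The number of tree edges on the path from `v` up to the root. -/
noncomputable def ArbTree.depth {V : Type} [DecidableEq V] {v0 : V}
    (T : ArbTree V v0) (v : V) : ℕ :=
  Nat.find (T.reaches v)

/-- The recreation cost of `v`: total weight of the tree path from `v0` to `v`. -/
noncomputable def recCost {V : Type} [DecidableEq V] {v0 : V}
    (T : ArbTree V v0) (w : V → V → ℝ) (v : V) : ℝ :=
  ∑ i ∈ Finset.range (T.depth v), w (T.parent^[i+1] v) (T.parent^[i] v)

/-- The storage cost of the tree: total weight of its edges. -/
noncomputable def treeCost {V : Type} [Fintype V] [DecidableEq V] {v0 : V}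
    (T : ArbTree V v0) (w : V → V → ℝ) : ℝ :=
  ∑ v ∈ Finset.univ.filter (· ≠ v0), w (T.parent v) v

/-- The tree is a spanning tree of the graph with adjacency `Adj`. -/
def IsSpanning {V : Type} {v0 : V} (Adj : V → V → Prop) (T : ArbTree V v0) : Prop :=
  ∀ v, v ≠ v0 → Adj (T.parent v) v

/-- `l` is a walk from `a` to `b` in the graph with adjacency `Adj`. -/
def IsWalk {V : Type} (Adj : V → V → Prop) (a b : V) (l : List V) : Prop :=
  l.Chain' Adj ∧ l.head? = some a ∧ l.getLast? = some b

/-- Total weight of a walk. -/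
def walkCost {V : Type} (w : V → V → ℝ) : List V → ℝ
  | [] => 0
  | [_] => 0
  | a :: b :: rest => w a b + walkCost w (b :: rest)

/-- Shortest-path distance from `a` to `b`. -/
noncomputable def graphDist {V : Type} (Adj : V → V → Prop) (w : V → V → ℝ)
    (a b : V) : ℝ :=
  sInf {c | ∃ l, IsWalk Adj a b l ∧ walkCost w l = c}

open Finset

variable {V : Type}

section Walks

variable {A B : V → V → Prop} {w : V → V → ℝ} {a b c x y : V} {l : List V}

lemma isWalk_iff : IsWalk A a b l ↔ l.IsChain A ∧ l.head? = some a ∧ l.getLast? = some b :=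
  Iff.rfl

lemma walkCost_nonneg (hw : ∀ a b, 0 ≤ w a b) : ∀ l : List V, 0 ≤ walkCost w l
  | [] | [_] => le_rfl
  | a :: b :: l => add_nonneg (hw a b) (walkCost_nonneg hw (b :: l))

lemma walkCost_append_cons (l₁ : List V) (x : V) (l₂ : List V) :
    walkCost w (l₁ ++ x :: l₂) = walkCost w (l₁ ++ [x]) + walkCost w (x :: l₂) := by
  induction l₁ with
  | nil => simp [walkCost]
  | cons a l₁ ih =>
    cases l₁ with
    | nil => simp [walkCost]
    | cons b l₁ =>
      simp only [List.cons_append, walkCost] at ih ⊢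
      rw [ih]
      ring

lemma isWalk_append_cons_iff {l₁ l₂ : List V} :
    IsWalk A a b (l₁ ++ x :: l₂) ↔ IsWalk A a x (l₁ ++ [x]) ∧ IsWalk A x b (x :: l₂) := by
  have hhead : (l₁ ++ x :: l₂).head? = (l₁ ++ [x]).head? := by cases l₁ <;> rfl
  simp only [isWalk_iff, List.isChain_split (l₁ := l₁) (c := x) (l₂ := l₂), hhead,
    List.getLast?_append, List.getLast?_singleton, Option.some_or, List.head?_cons]
  tauto

lemma IsWalk.mono (h : IsWalk A a b l) (hAB : ∀ x y, A x y → B x y) : IsWalk B a b l :=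
  ⟨h.1.imp hAB, h.2⟩

lemma IsWalk.exists_prefix (h : IsWalk A a b l) (hx : x ∈ l) : ∃ l', IsWalk A a x l' := by
  obtain ⟨s, t, rfl⟩ := List.append_of_mem hx
  exact ⟨_, (isWalk_append_cons_iff.1 h).1⟩

lemma IsWalk.eq_append_singleton (h : IsWalk A a b l) : ∃ s, l = s ++ [b] := by
  rcases List.eq_nil_or_concat' l with rfl | ⟨s, c, rfl⟩
  · simp [isWalk_iff] at h
  · obtain rfl : c = b := by simpa using h.2.2
    exact ⟨s, rfl⟩

lemma IsWalk.concat (h : IsWalk A a b l) (hbc : A b c) :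
    IsWalk A a c (l ++ [c]) ∧ walkCost w (l ++ [c]) = walkCost w l + w b c := by
  obtain ⟨s, rfl⟩ := h.eq_append_singleton
  rw [List.append_assoc, List.singleton_append, isWalk_append_cons_iff, walkCost_append_cons]
  exact ⟨⟨h, by simpa [isWalk_iff] using hbc⟩, by simp [walkCost]⟩

lemma IsWalk.exists_last_step (h : IsWalk A a b l) (hab : a ≠ b) :
    ∃ s u, l = s ++ [u, b] ∧ IsWalk A a u (s ++ [u]) ∧ A u b := by
  obtain ⟨s, rfl⟩ := h.eq_append_singleton
  rcases List.eq_nil_or_concat' s with rfl | ⟨s, u, rfl⟩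
  · simp only [isWalk_iff, List.nil_append, List.head?_cons, Option.some_inj] at h
    exact absurd h.2.1.symm hab
  · rw [List.append_assoc, List.singleton_append, isWalk_append_cons_iff] at h
    exact ⟨s, u, by simp, h.1, by simpa [isWalk_iff] using h.2⟩

lemma IsWalk.exists_detour (h : IsWalk A a b l) (hx : x ∈ l) (hxy : A x y) (hyx : A y x) :
    ∃ l', IsWalk A a b l' ∧ y ∈ l' ∧ (∀ z ∈ l, z ∈ l') ∧
      walkCost w l' = walkCost w l + (w x y + w y x) := by
  obtain ⟨s, t, rfl⟩ := List.append_of_mem hx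
  obtain ⟨hs, ht⟩ := isWalk_append_cons_iff.1 h
  refine ⟨s ++ x :: y :: x :: t, isWalk_append_cons_iff.2 ⟨hs, ?_⟩, by simp, ?_, ?_⟩
  · exact isWalk_append_cons_iff (l₁ := [x, y]).2 ⟨by simp [isWalk_iff, hxy, hyx], ht⟩
  · intro z hz
    simp only [List.mem_append, List.mem_cons] at hz ⊢
    tauto
  · rw [walkCost_append_cons s x, walkCost_append_cons s x t]
    simp only [walkCost]
    ring

lemma IsWalk.exists_nodup (hw : ∀ a b, 0 ≤ w a b) (h : IsWalk A a b l) :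
    ∃ l', IsWalk A a b l' ∧ l'.Nodup ∧ walkCost w l' ≤ walkCost w l := by
  induction hn : l.length using Nat.strong_induction_on generalizing l with
  | _ n ih =>
  by_cases hl : l.Nodup
  · exact ⟨l, h, hl, le_rfl⟩
  obtain ⟨x, hx⟩ : ∃ x, [x, x].Sublist l := by simpa [List.nodup_iff_sublist] using hl
  obtain ⟨r₁, r₂, rfl, h₁, h₂⟩ := List.cons_sublist_iff.1 hx
  obtain ⟨s, t, rfl⟩ := List.append_of_mem h₁
  obtain ⟨s', t', rfl⟩ := List.append_of_mem (h₂.subset (List.mem_singleton_self x))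
  -- cut out the closed walk `x :: m ++ [x]` between the two occurrences of `x`
  set m := t ++ s'
  have hloop : s ++ x :: t ++ (s' ++ x :: t') = s ++ x :: (m ++ x :: t') := by
    simp [m]
  rw [hloop, isWalk_append_cons_iff] at h
  obtain ⟨hs, hx⟩ := (isWalk_append_cons_iff (l₁ := x :: m)).1 h.2
  obtain ⟨l', hl', hnd, hcost⟩ := ih (s ++ x :: t').length (by simp at hn ⊢; omega)
    (isWalk_append_cons_iff.2 ⟨h.1, hx⟩) rfl
  refine ⟨l', hl', hnd, hcost.trans ?_⟩
  rw [hloop, walkCost_append_cons s x t', walkCost_append_cons s x (m ++ x :: t'),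
    show x :: (m ++ x :: t') = (x :: m) ++ x :: t' from rfl, walkCost_append_cons (x :: m) x t']
  linarith [walkCost_nonneg hw (x :: m ++ [x])]

end Walks

section Dist

variable {A : V → V → Prop} {w : V → V → ℝ} {a b c : V} {l : List V}

lemma graphDist_le (hw : ∀ a b, 0 ≤ w a b) (h : IsWalk A a b l) :
    graphDist A w a b ≤ walkCost w l :=
  csInf_le ⟨0, by rintro _ ⟨l, -, rfl⟩; exact walkCost_nonneg hw l⟩ ⟨l, h, rfl⟩

lemma graphDist_nonneg (hw : ∀ a b, 0 ≤ w a b) (hab : ∃ l, IsWalk A a b l) :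
    0 ≤ graphDist A w a b := by
  obtain ⟨l, hl⟩ := hab
  exact le_csInf ⟨_, l, hl, rfl⟩ (by rintro _ ⟨l, -, rfl⟩; exact walkCost_nonneg hw l)

lemma graphDist_self (hw : ∀ a b, 0 ≤ w a b) (a : V) : graphDist A w a a = 0 := by
  have hwalk : IsWalk A a a [a] := by simp [isWalk_iff]
  exact le_antisymm (by simpa [walkCost] using graphDist_le hw hwalk)
    (graphDist_nonneg hw ⟨_, hwalk⟩)

lemma exists_walkCost_eq_graphDist [Finite V] (hw : ∀ a b, 0 ≤ w a b)
    (hab : ∃ l, IsWalk A a b l) : ∃ l, IsWalk A a b l ∧ walkCost w l = graphDist A w a b := by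
  have hfin : {l | IsWalk A a b l ∧ l.Nodup}.Finite :=
    (List.finite_length_le V (Nat.card V)).subset fun l hl => hl.2.length_le_natCard
  obtain ⟨l, hl⟩ := hab
  obtain ⟨l', hl', hnd, -⟩ := hl.exists_nodup hw
  obtain ⟨l₀, ⟨hl₀, -⟩, hmin⟩ := Set.exists_min_image _ (walkCost w) hfin ⟨l', hl', hnd⟩
  refine ⟨l₀, hl₀, le_antisymm ?_ (graphDist_le hw hl₀)⟩
  refine le_csInf ⟨_, l, hl, rfl⟩ ?_
  rintro _ ⟨l, hl, rfl⟩
  obtain ⟨l', hl', hnd, hcost⟩ := hl.exists_nodup hw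
  exact (hmin l' ⟨hl', hnd⟩).trans hcost

lemma graphDist_le_add [Finite V] (hw : ∀ a b, 0 ≤ w a b) (hab : ∃ l, IsWalk A a b l)
    (hbc : A b c) : graphDist A w a c ≤ graphDist A w a b + w b c := by
  obtain ⟨l, hl, hcost⟩ := exists_walkCost_eq_graphDist hw hab
  obtain ⟨hwalk, hconcat⟩ := hl.concat (w := w) hbc
  exact (graphDist_le hw hwalk).trans_eq (by rw [hconcat, hcost])

end Dist

namespace ArbTree

variable {v0 : V}

def ofDecreasing (p : V → V) (M : V → ℕ) (hp : p v0 = v0) (hM : ∀ v, v ≠ v0 → M (p v) < M v) :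
    ArbTree V v0 where
  parent := p
  root_fix := hp
  reaches v := by
    induction hn : M v using Nat.strong_induction_on generalizing v with
    | _ n ih =>
      by_cases hv : v = v0
      · exact ⟨0, hv⟩
      · obtain ⟨k, hk⟩ := ih _ (hn ▸ hM v hv) (p v) rfl
        exact ⟨k + 1, hk⟩

variable [DecidableEq V] (T : ArbTree V v0) {v : V}

lemma depth_eq_zero_iff : T.depth v = 0 ↔ v = v0 :=
  Nat.find_eq_zero (T.reaches v)

lemma depth_root : T.depth v0 = 0 :=
  T.depth_eq_zero_iff.2 rfl

lemma depth_of_ne_root (hv : v ≠ v0) : T.depth v = T.depth (T.parent v) + 1 := by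
  have hpos : T.depth v ≠ 0 := mt T.depth_eq_zero_iff.1 hv
  refine le_antisymm (Nat.find_le ?_) ?_
  · exact Nat.find_spec (T.reaches (T.parent v))
  · have : T.depth (T.parent v) ≤ T.depth v - 1 := Nat.find_le <| by
      rw [← Function.iterate_succ_apply, Nat.succ_eq_add_one, Nat.sub_add_cancel
        (Nat.pos_of_ne_zero hpos)]
      exact Nat.find_spec (T.reaches v)
    omega

@[elab_as_elim]
theorem induction_on {P : V → Prop} (v : V) (root : P v0)
    (step : ∀ v, v ≠ v0 → P (T.parent v) → P v) : P v := by
  induction hn : T.depth v generalizing v with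
  | zero => rwa [T.depth_eq_zero_iff.1 hn]
  | succ n ih =>
    have hv : v ≠ v0 := by rintro rfl; simp [depth_root] at hn
    exact step v hv (ih _ (by rw [T.depth_of_ne_root hv] at hn; omega))

lemma recCost_root (w : V → V → ℝ) : recCost T w v0 = 0 := by
  simp [recCost, depth_root]

lemma recCost_of_ne_root (w : V → V → ℝ) (hv : v ≠ v0) :
    recCost T w v = recCost T w (T.parent v) + w (T.parent v) v := by
  simp only [recCost, T.depth_of_ne_root hv, Finset.sum_range_succ', Function.iterate_succ_apply]
  rfl

lemma parentEdge_injOn : Set.InjOn (fun v => s(T.parent v, v)) {v | v ≠ v0} := by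
  intro u hu v hv h
  rcases Sym2.eq_iff.1 h with ⟨-, h⟩ | ⟨h₁, h₂⟩
  · exact h
  · have hdu := T.depth_of_ne_root hu
    have hdv := T.depth_of_ne_root hv
    rw [h₁] at hdu
    rw [← h₂] at hdv
    omega

variable [Fintype V]

def edgeFinset : Finset (Sym2 V) :=
  (univ.filter (· ≠ v0)).image fun v => s(T.parent v, v)

lemma sum_edgeFinset {w : V → V → ℝ} {W : Sym2 V → ℝ} (hW : ∀ a b, W s(a, b) = w a b) :
    ∑ e ∈ T.edgeFinset, W e = treeCost T w := by
  rw [edgeFinset, sum_image fun u hu v hv => T.parentEdge_injOn (by simpa using hu)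
    (by simpa using hv)]
  simp [treeCost, hW]

lemma adj_of_mem_edgeFinset {A : V → V → Prop} (hsym : ∀ a b, A a b → A b a)
    (hT : IsSpanning A T) {a b : V} (h : s(a, b) ∈ T.edgeFinset) : A a b := by
  obtain ⟨v, hv, hab⟩ := mem_image.1 h
  have hv : v ≠ v0 := by simpa using hv
  rcases Sym2.eq_iff.1 hab with ⟨rfl, rfl⟩ | ⟨rfl, rfl⟩
  · exact hT v hv
  · exact hsym _ _ (hT v hv)

lemma treeCost_le_sum_of_isSpanning {w : V → V → ℝ} (hw : ∀ a b, 0 ≤ w a b) {W : Sym2 V → ℝ}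
    (hW : ∀ a b, W s(a, b) = w a b) {E : Finset (Sym2 V)}
    (hT : IsSpanning (fun a b => s(a, b) ∈ E) T) : treeCost T w ≤ ∑ e ∈ E, W e := by
  rw [← T.sum_edgeFinset hW]
  refine sum_le_sum_of_subset_of_nonneg ?_ fun e _ _ => ?_
  · intro e he
    obtain ⟨v, hv, rfl⟩ := mem_image.1 he
    exact hT v (by simpa using hv)
  · induction e using Sym2.ind with
    | _ a b => exact (hW a b).symm ▸ hw a b

theorem exists_tour {w : V → V → ℝ} (hwsym : ∀ a b, w a b = w b a) :
    ∃ l, IsWalk (fun a b => s(a, b) ∈ T.edgeFinset) v0 v0 l ∧ (∀ v, v ∈ l) ∧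
      walkCost w l = 2 * treeCost T w := by
  suffices h : ∀ s : Finset V, (∀ v ∈ s, v ≠ v0 → T.parent v ∈ insert v0 s) →
      ∃ l, IsWalk (fun a b => s(a, b) ∈ T.edgeFinset) v0 v0 l ∧ (∀ v ∈ s, v ∈ l) ∧
        walkCost w l = 2 * ∑ v ∈ s.filter (· ≠ v0), w (T.parent v) v by
    obtain ⟨l, hl, hmem, hcost⟩ := h univ (by simp)
    exact ⟨l, hl, fun v => hmem v (mem_univ v), hcost⟩
  intro s
  -- adding the vertices by increasing depth, each new vertex is a leaf hanging off the tour
  induction s using Finset.induction_on_max_value T.depth with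
  | empty => exact fun _ => ⟨[v0], by simp [isWalk_iff], by simp, by simp [walkCost]⟩
  | insert a s has hmax ih =>
    intro hclosed
    have hroot_mem : ∀ {l : List V}, IsWalk (fun a b => s(a, b) ∈ T.edgeFinset) v0 v0 l →
        v0 ∈ l := fun hl => List.mem_of_mem_head? hl.2.1
    obtain ⟨l, hl, hmem, hcost⟩ := ih fun v hv hv0 => by
      have hpa : T.parent v ≠ a := fun h => by
        have := T.depth_of_ne_root hv0
        rw [h] at this
        linarith [hmax v hv]
      simpa [hpa] using hclosed v (mem_insert_of_mem hv) hv0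
    by_cases ha : a = v0
    · subst ha
      refine ⟨l, hl, fun v hv => ?_, by rw [hcost, filter_insert, if_neg (by simp)]⟩
      rcases mem_insert.1 hv with rfl | hv
      exacts [hroot_mem hl, hmem v hv]
    · have hpa : T.parent a ∈ l := by
        have hne : T.parent a ≠ a := fun h => by
          have := T.depth_of_ne_root ha
          rw [h] at this
          omega
        rcases mem_insert.1 (hclosed a (mem_insert_self a s) ha) with h | h
        · rw [h]
          exact hroot_mem hl
        · exact hmem _ ((mem_insert.1 h).resolve_left hne)
      have hedge : s(T.parent a, a) ∈ T.edgeFinset := mem_image.2 ⟨a, by simpa using ha, rfl⟩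
      obtain ⟨l', hl', ha', hsub, hcost'⟩ :=
        hl.exists_detour (w := w) hpa hedge (Sym2.eq_swap ▸ hedge)
      refine ⟨l', hl', fun v hv => ?_, ?_⟩
      · rcases mem_insert.1 hv with rfl | hv
        exacts [ha', hsub v (hmem v hv)]
      · rw [hcost', hcost, filter_insert, if_pos ha, sum_insert (by simp [has]), hwsym a]
        ring

end ArbTree

section ShortestPathTree

variable {A : V → V → Prop} {w : V → V → ℝ} {a b v : V} {l : List V}

/-- Preferring, among shortest walks, those with fewest vertices makes the choice of predecessors
acyclic even in the presence of zero-weight edges. -/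
noncomputable def shortestHops (A : V → V → Prop) (w : V → V → ℝ) (a b : V) : ℕ :=
  sInf {n | ∃ l, IsWalk A a b l ∧ walkCost w l = graphDist A w a b ∧ l.length = n}

lemma shortestHops_le (hl : IsWalk A a b l) (hcost : walkCost w l = graphDist A w a b) :
    shortestHops A w a b ≤ l.length :=
  Nat.sInf_le ⟨l, hl, hcost, rfl⟩

variable [Fintype V]

lemma exists_length_eq_shortestHops (hw : ∀ a b, 0 ≤ w a b) (hab : ∃ l, IsWalk A a b l) :
    ∃ l, IsWalk A a b l ∧ walkCost w l = graphDist A w a b ∧ l.length = shortestHops A w a b :=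
  have ⟨l, hl, hcost⟩ := exists_walkCost_eq_graphDist hw hab
  Nat.sInf_mem (s := {n | ∃ l, IsWalk A a b l ∧ walkCost w l = graphDist A w a b ∧ l.length = n})
    ⟨l.length, l, hl, hcost, rfl⟩

lemma exists_shortest_predecessor (hw : ∀ a b, 0 ≤ w a b) (hreach : ∀ v, ∃ l, IsWalk A a v l)
    (hv : v ≠ a) : ∃ u, A u v ∧ graphDist A w a v = graphDist A w a u + w u v ∧
      shortestHops A w a u < shortestHops A w a v := by
  obtain ⟨l, hl, hcost, hlen⟩ := exists_length_eq_shortestHops hw (hreach v)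
  obtain ⟨s, u, rfl, hs, huv⟩ := hl.exists_last_step hv.symm
  have hsplit : walkCost w (s ++ [u, v]) = walkCost w (s ++ [u]) + w u v := by
    simp [walkCost_append_cons s u [v], walkCost]
  have hu := graphDist_le hw hs
  have hv' := graphDist_le_add hw (hreach u) huv
  refine ⟨u, huv, by linarith, ?_⟩
  have := shortestHops_le hs (by linarith)
  simp only [List.length_append, List.length_cons, List.length_nil] at this hlen
  omega

theorem exists_isSpanning_recCost_le_graphDist [DecidableEq V] {v0 : V}
    (hw : ∀ a b, 0 ≤ w a b) (hreach : ∀ v, ∃ l, IsWalk A v0 v l) :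
    ∃ T : ArbTree V v0, IsSpanning A T ∧ ∀ v, recCost T w v ≤ graphDist A w v0 v := by
  choose u hu hdist hhops using fun v (hv : v ≠ v0) => exists_shortest_predecessor hw hreach hv
  let T := ArbTree.ofDecreasing (fun v => if hv : v = v0 then v0 else u v hv)
    (shortestHops A w v0) (dif_pos rfl) fun v hv => by simpa [hv] using hhops v hv
  have hT : ∀ v (hv : v ≠ v0), T.parent v = u v hv := fun v hv => dif_neg hv
  refine ⟨T, fun v hv => hT v hv ▸ hu v hv, fun v => T.induction_on v ?_ fun v hv ih => ?_⟩
  · rw [T.recCost_root]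
    exact graphDist_nonneg hw (hreach v0)
  · rw [T.recCost_of_ne_root w hv, hdist v hv, hT v hv]
    rw [hT v hv] at ih
    linarith

end ShortestPathTree

lemma exists_isSpanning_treeCost_eq_sInf [Fintype V] [DecidableEq V] {A : V → V → Prop}
    {v0 : V} (hreach : ∀ v, ∃ l, IsWalk A v0 v l) (w : V → V → ℝ) :
    ∃ T : ArbTree V v0, IsSpanning A T ∧
      treeCost T w = sInf {c | ∃ T' : ArbTree V v0, IsSpanning A T' ∧ treeCost T' w = c} := by
  set S := {c | ∃ T' : ArbTree V v0, IsSpanning A T' ∧ treeCost T' w = c}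
  obtain ⟨T, hT, -⟩ := exists_isSpanning_recCost_le_graphDist (w := 0) (fun _ _ => le_rfl) hreach
  have hne : S.Nonempty := ⟨_, T, hT, rfl⟩
  have hfin : S.Finite :=
    (Set.finite_range fun p : V → V => ∑ v ∈ univ.filter (· ≠ v0), w (p v) v).subset
      fun _ ⟨T', _, hc⟩ => ⟨T'.parent, hc⟩
  exact hne.csInf_mem hfin

lemma sum_toFinset_le_sum_map {ι : Type*} [DecidableEq ι] {f : ι → ℝ} (hf : ∀ i, 0 ≤ f i)
    (l : List ι) : ∑ i ∈ l.toFinset, f i ≤ (l.map f).sum := by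
  have hdedup : l.toFinset = l.dedup.toFinset := by
    ext
    simp
  rw [hdedup, List.sum_toFinset f (List.nodup_dedup l)]
  exact ((List.dedup_sublist l).map f).sum_le_sum (by simpa using fun i _ => hf i)

section WalkEdges

variable {A : V → V → Prop} {a b : V} {l : List V}

def walkEdges : List V → List (Sym2 V)
  | a :: b :: l => s(a, b) :: walkEdges (b :: l)
  | _ => []

lemma sum_map_walkEdges {w : V → V → ℝ} {W : Sym2 V → ℝ} (hW : ∀ a b, W s(a, b) = w a b) :
    ∀ l : List V, ((walkEdges l).map W).sum = walkCost w l
  | [] | [_] => by simp [walkEdges, walkCost]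
  | a :: b :: l => by simp [walkEdges, walkCost, hW, sum_map_walkEdges hW (b :: l)]

lemma isChain_mem_walkEdges : ∀ l : List V, l.IsChain fun a b => s(a, b) ∈ walkEdges l
  | [] | [_] => by simp
  | a :: b :: l => List.isChain_cons_cons.2 ⟨by simp [walkEdges],
      (isChain_mem_walkEdges (b :: l)).imp fun _ _ h => by simp [walkEdges, h]⟩

lemma IsWalk.of_walkEdges (h : IsWalk A a b l) : IsWalk (fun a b => s(a, b) ∈ walkEdges l) a b l :=
  ⟨isChain_mem_walkEdges l, h.2⟩

lemma adj_of_mem_walkEdges (hsym : ∀ a b, A a b → A b a) :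
    ∀ {l : List V}, l.IsChain A → ∀ {x y : V}, s(x, y) ∈ walkEdges l → A x y
  | [], _, _, _, h | [_], _, _, _, h => by simp [walkEdges] at h
  | a :: b :: l, hl, x, y, h => by
    rw [List.isChain_cons_cons] at hl
    simp only [walkEdges, List.mem_cons, Sym2.eq_iff] at h
    rcases h with (⟨rfl, rfl⟩ | ⟨rfl, rfl⟩) | h
    · exact hl.1
    · exact hsym _ _ hl.1
    · exact adj_of_mem_walkEdges hsym hl.2 h

variable [Fintype V] [DecidableEq V] {v0 : V}

noncomputable def ArbTree.edgesWithWalks (T : ArbTree V v0) (P : V → List V) (B : List V) :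
    Finset (Sym2 V) :=
  (T.edgeFinset.toList ++ B.flatMap fun b => walkEdges (P b)).toFinset

lemma ArbTree.mem_edgesWithWalks {T : ArbTree V v0} {P : V → List V} {B : List V} {e : Sym2 V} :
    e ∈ T.edgesWithWalks P B ↔ e ∈ T.edgeFinset ∨ ∃ b ∈ B, e ∈ walkEdges (P b) := by
  simp [edgesWithWalks]

lemma ArbTree.sum_edgesWithWalks_le (T : ArbTree V v0) {w : V → V → ℝ} {W : Sym2 V → ℝ}
    (hW0 : ∀ e, 0 ≤ W e) (hW : ∀ a b, W s(a, b) = w a b) (P : V → List V) (B : List V) :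
    ∑ e ∈ T.edgesWithWalks P B, W e ≤ treeCost T w + (B.map fun b => walkCost w (P b)).sum := by
  refine (sum_toFinset_le_sum_map hW0 _).trans_eq ?_
  simp [List.flatMap, Function.comp_def, sum_map_walkEdges hW, Finset.sum_map_toList,
    T.sum_edgeFinset hW]

end WalkEdges

section Breakpoints

variable {A : V → V → Prop} {w : V → V → ℝ} {d : V → ℝ} {α : ℝ}

/-- `D` bounds the root distance of the current vertex in the subgraph built so far (a shortest path
to the last breakpoint, then the tour); `z` becomes a breakpoint, and `D` is reset to `d z`, once
`D` exceeds `α * d z`. -/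
noncomputable def breakpoints (w : V → V → ℝ) (d : V → ℝ) (α : ℝ) : List V → ℝ → List V
  | [], _ => []
  | [z], D => if α * d z < D then [z] else []
  | z :: z' :: l, D =>
    if α * d z < D then z :: breakpoints w d α (z' :: l) (d z + w z z')
    else breakpoints w d α (z' :: l) (D + w z z')

lemma sum_breakpoints_le (hd : ∀ v, 0 ≤ d v) (hw : ∀ a b, 0 ≤ w a b) :
    ∀ (l : List V) (D : ℝ), 0 ≤ D →
      (α - 1) * ((breakpoints w d α l D).map d).sum ≤ D + walkCost w l
  | [], D, hD => by simpa [breakpoints, walkCost] using hD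
  | [z], D, hD => by
    unfold breakpoints
    split_ifs with h
    · simp only [List.map_cons, List.map_nil, List.sum_cons, List.sum_nil, walkCost]
      nlinarith [hd z]
    · simpa [walkCost] using hD
  | z :: z' :: l, D, hD => by
    unfold breakpoints
    split_ifs with h
    · have ih := sum_breakpoints_le hd hw (z' :: l) _ (add_nonneg (hd z) (hw z z'))
      simp only [List.map_cons, List.sum_cons, walkCost] at ih ⊢
      nlinarith
    · have ih := sum_breakpoints_le hd hw (z' :: l) _ (add_nonneg hD (hw z z'))
      simp only [walkCost]
      linarith

lemma le_mul_of_breakpoints (f : V → ℝ) (hα : 1 ≤ α) (hd : ∀ v, 0 ≤ d v)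
    (hstep : ∀ a b, A a b → f b ≤ f a + w a b) :
    ∀ (z : V) (l : List V) (D : ℝ), (z :: l).IsChain A → f z ≤ D →
      (∀ b ∈ breakpoints w d α (z :: l) D, f b ≤ d b) → ∀ y ∈ z :: l, f y ≤ α * d y := by
  have hhead : ∀ z l D, f z ≤ D → (∀ b ∈ breakpoints w d α (z :: l) D, f b ≤ d b) →
      f z ≤ α * d z := by
    intro z l D hz hB
    by_cases h : α * d z < D
    · have hzB : z ∈ breakpoints w d α (z :: l) D := by
        cases l <;> simp [breakpoints, h]
      nlinarith [hB z hzB, hd z]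
    · linarith
  intro z l D hl hz hB
  induction l generalizing z D with
  | nil => simpa using hhead z [] D hz hB
  | cons z' l ih =>
    intro y hy
    rcases List.mem_cons.1 hy with rfl | hy
    · exact hhead y _ D hz hB
    have hzz' := hstep z z' (List.isChain_cons_cons.1 hl).1
    by_cases h : α * d z < D
    · refine ih z' (d z + w z z') (List.isChain_cons_cons.1 hl).2 ?_ (fun b hb => hB b ?_) y hy
      · nlinarith [hB z (by simp [breakpoints, h])]
      · simp [breakpoints, h, hb]
    · refine ih z' (D + w z z') (List.isChain_cons_cons.1 hl).2 ?_ (fun b hb => hB b ?_) y hy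
      · linarith
      · simpa [breakpoints, h] using hb

end Breakpoints

theorem exists_light_subgraph [Fintype V] [DecidableEq V] {Adj : V → V → Prop}
    (hsym : ∀ a b, Adj a b → Adj b a) {w : V → V → ℝ} (hw : ∀ a b, 0 ≤ w a b)
    {W : Sym2 V → ℝ} (hW : ∀ a b, W s(a, b) = w a b) {v0 : V}
    (hreach : ∀ v, ∃ l, IsWalk Adj v0 v l) (TM : ArbTree V v0) (hTM : IsSpanning Adj TM)
    {α : ℝ} (hα : 1 < α) :
    ∃ E : Finset (Sym2 V), (∀ a b, s(a, b) ∈ E → Adj a b) ∧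
      (∀ v, ∃ l, IsWalk (fun a b => s(a, b) ∈ E) v0 v l) ∧
      (∀ v, graphDist (fun a b => s(a, b) ∈ E) w v0 v ≤ α * graphDist Adj w v0 v) ∧
      ∑ e ∈ E, W e ≤ (1 + 2 / (α - 1)) * treeCost TM w := by
  have hwsym : ∀ a b, w a b = w b a := fun a b => by rw [← hW, Sym2.eq_swap, hW]
  have hW0 : ∀ e, 0 ≤ W e := fun e => Sym2.ind (fun a b => (hW a b).symm ▸ hw a b) e
  set d := graphDist Adj w v0
  have hd : ∀ v, 0 ≤ d v := fun v => graphDist_nonneg hw (hreach v)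
  obtain ⟨L, hL, hLall, hLcost⟩ := TM.exists_tour hwsym
  obtain ⟨L, rfl⟩ := List.head?_eq_some_iff.1 hL.2.1
  choose P hP hPcost using fun v => exists_walkCost_eq_graphDist hw (hreach v)
  set B := breakpoints w d α (v0 :: L) 0
  set H : V → V → Prop := fun a b => s(a, b) ∈ TM.edgesWithWalks P B
  have hTH : ∀ a b, s(a, b) ∈ TM.edgeFinset → H a b :=
    fun a b h => ArbTree.mem_edgesWithWalks.2 (Or.inl h)
  have hreachH : ∀ v, ∃ l, IsWalk H v0 v l := fun v => (hL.mono hTH).exists_prefix (hLall v)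
  refine ⟨TM.edgesWithWalks P B, fun a b hab => ?_, hreachH, fun v => ?_, ?_⟩
  · rcases ArbTree.mem_edgesWithWalks.1 hab with h | ⟨c, -, h⟩
    · exact TM.adj_of_mem_edgeFinset hsym hTM h
    · exact adj_of_mem_walkEdges hsym (hP c).1 h
  · refine le_mul_of_breakpoints _ hα.le hd (fun a b hab => graphDist_le_add hw (hreachH a)
      (hTH a b hab)) v0 L 0 hL.1 (graphDist_self hw v0).le (fun b hb => ?_) v (hLall v)
    refine (graphDist_le hw ((hP b).of_walkEdges.mono fun x y h => ?_)).trans_eq (hPcost b)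
    exact ArbTree.mem_edgesWithWalks.2 (Or.inr ⟨b, hb, h⟩)
  · have hB : (α - 1) * (B.map d).sum ≤ 2 * treeCost TM w := by
      simpa [hLcost] using sum_breakpoints_le hd hw (v0 :: L) 0 le_rfl
    calc ∑ e ∈ TM.edgesWithWalks P B, W e
        ≤ treeCost TM w + (B.map fun b => walkCost w (P b)).sum :=
          TM.sum_edgesWithWalks_le hW0 hW P B
      _ = treeCost TM w + (B.map d).sum := by rw [List.map_congr_left fun b _ => hPcost b]
      _ ≤ treeCost TM w + 2 * treeCost TM w / (α - 1) := by
          gcongr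
          rw [le_div_iff₀ (by linarith)]
          linarith
      _ = (1 + 2 / (α - 1)) * treeCost TM w := by ring

/-- LAST: for a connected undirected weighted graph and `α > 1`, there
is a spanning tree `T` rooted at `v0` such that every vertex's tree-path weight from
`v0` is at most `α` times its shortest-path distance, and the total weight of `T` is at
most `(1 + 2/(α-1))` times the minimum spanning tree weight. -/
theorem stmt11 {V : Type} [Fintype V] [DecidableEq V]
    (Adj : V → V → Prop) (hsym : ∀ a b, Adj a b → Adj b a)
    (w : V → V → ℝ) (hwsym : ∀ a b, w a b = w b a) (hw : ∀ a b, 0 ≤ w a b)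
    (v0 : V) (hconn : ∀ a b, ∃ l, IsWalk Adj a b l)
    (α : ℝ) (hα : 1 < α) :
    ∃ T : ArbTree V v0, IsSpanning Adj T ∧
      (∀ v, recCost T w v ≤ α * graphDist Adj w v0 v) ∧
      treeCost T w ≤ (1 + 2 / (α - 1)) *
        sInf {c | ∃ T' : ArbTree V v0, IsSpanning Adj T' ∧ treeCost T' w = c} := by
  have hW : ∀ a b, Sym2.lift ⟨w, hwsym⟩ s(a, b) = w a b := fun _ _ => rfl
  obtain ⟨TM, hTM, hTMmin⟩ := exists_isSpanning_treeCost_eq_sInf (hconn v0) w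
  obtain ⟨E, hEG, hreach, hdist, hcost⟩ :=
    exists_light_subgraph hsym hw hW (hconn v0) TM hTM hα
  obtain ⟨T, hT, hrec⟩ := exists_isSpanning_recCost_le_graphDist hw hreach
  refine ⟨T, fun v hv => hEG _ _ (hT v hv), fun v => (hrec v).trans (hdist v), ?_⟩
  rw [← hTMmin]
  exact (T.treeCost_le_sum_of_isSpanning hw hW hT).trans hcost
end

section
/- In the LMG exchange step: let T be a spanning tree rooted at v0, v a vertex with current parent u' in T, and consider replacing edge (u', v) by edge (v0, v) (materializing v). Then the recreation cost of every descendant w of v in T (including v) decreases by exactly R_T(v) - Phi(v0, v), where R_T(v) is v's recreation cost in T, and the recreation cost of every non-descendant is unchanged; hence the total recreation cost decreases by k * (R_T(v) - Phi(v0,v)) where k is the number of vertices in the subtree rooted at v. -/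
/-!
Rerooting `v` at `v0` changes only the parent of `v`. A non-descendant's path to the root
never meets `v`, so it is the same in both trees. A descendant `x` with `p^[n] x = v` keeps
its path up to `v`, and from `v` the old tail, of cost `R_T(v)`, is replaced by the single
edge `(v0, v)`. Summing over all vertices gives the total change.
-/

theorem Function.iterate_eq_of_forall_lt {α : Type*} {f g : α → α} {x : α} {n : ℕ}
    (h : ∀ i < n, g (f^[i] x) = f (f^[i] x)) : ∀ i ≤ n, g^[i] x = f^[i] x
  | 0, _ => rfl
  | i + 1, hi => by
    rw [Function.iterate_succ_apply', Function.iterate_succ_apply',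
      Function.iterate_eq_of_forall_lt h i (by omega), h i (by omega)]

theorem Finset.sum_eq_sum_sub_card_mul {α : Type*} [Fintype α] (p : α → Prop)
    [DecidablePred p] {f g : α → ℝ} (c : ℝ) (hp : ∀ x, p x → f x = g x - c)
    (hnp : ∀ x, ¬p x → f x = g x) :
    ∑ x, f x = ∑ x, g x - (Nat.card {x // p x} : ℝ) * c := by
  have hf : ∀ x, f x = g x - if p x then c else 0 := fun x => by
    split_ifs with h
    · exact hp x h
    · rw [hnp x h, sub_zero]
  rw [Finset.sum_congr rfl fun x _ => hf x, Finset.sum_sub_distrib, Finset.sum_ite,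
    Finset.sum_const, Finset.sum_const_zero, add_zero, Nat.card_eq_fintype_card,
    Fintype.card_subtype, nsmul_eq_mul]

namespace ArbTree

theorem iterate_parent_root {V : Type} {v0 : V} (T : ArbTree V v0) (k : ℕ) :
    T.parent^[k] v0 = v0 :=
  Function.iterate_fixed T.root_fix k

variable {V : Type} [DecidableEq V] {v0 : V}

theorem iterate_parent_depth (T : ArbTree V v0) (x : V) : T.parent^[T.depth x] x = v0 :=
  Nat.find_spec (T.reaches x)

theorem iterate_parent_ne_root_of_lt_depth (T : ArbTree V v0) {x : V} {m : ℕ}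
    (hm : m < T.depth x) : T.parent^[m] x ≠ v0 :=
  Nat.find_min (T.reaches x) hm

theorem lt_depth_of_iterate_parent_ne_root (T : ArbTree V v0) {x : V} {m : ℕ}
    (hm : T.parent^[m] x ≠ v0) : m < T.depth x := by
  by_contra! h
  apply hm
  rw [← Nat.sub_add_cancel h, Function.iterate_add_apply, T.iterate_parent_depth,
    T.iterate_parent_root]

theorem depth_iterate_parent (T : ArbTree V v0) {x : V} {n : ℕ} (hn : n ≤ T.depth x) :
    T.depth (T.parent^[n] x) = T.depth x - n := by
  rw [ArbTree.depth, Nat.find_eq_iff]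
  refine ⟨?_, fun m hm => ?_⟩
  · rw [← Function.iterate_add_apply, Nat.sub_add_cancel hn, T.iterate_parent_depth]
  · rw [← Function.iterate_add_apply]
    exact T.iterate_parent_ne_root_of_lt_depth (by omega)

theorem iterate_parent_injective (T : ArbTree V v0) {x : V} {i j : ℕ}
    (hj : T.parent^[j] x ≠ v0) (h : T.parent^[i] x = T.parent^[j] x) : i = j := by
  have hi : i < T.depth x := T.lt_depth_of_iterate_parent_ne_root (h ▸ hj)
  have hj' : j < T.depth x := T.lt_depth_of_iterate_parent_ne_root hj
  have := congrArg T.depth h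
  rw [T.depth_iterate_parent hi.le, T.depth_iterate_parent hj'.le] at this
  omega

theorem depth_eq_of_iterate_parent_eq (S T : ArbTree V v0) {x : V}
    (h : ∀ i, S.parent^[i] x = T.parent^[i] x) : S.depth x = T.depth x :=
  Nat.find_congr' fun {n} => by rw [h n]

theorem depth_eq_one (T : ArbTree V v0) {x : V} (hx : x ≠ v0) (h : T.parent x = v0) :
    T.depth x = 1 := by
  rw [ArbTree.depth, Nat.find_eq_iff]
  exact ⟨h, fun m hm => by rwa [Nat.lt_one_iff.mp hm]⟩

end ArbTree

section recCost

variable {V : Type} [DecidableEq V] {v0 : V}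

open ArbTree

theorem recCost_eq_sum_add (T : ArbTree V v0) (w : V → V → ℝ) {x : V} {n : ℕ}
    (hn : n ≤ T.depth x) :
    recCost T w x = ∑ i ∈ Finset.range n, w (T.parent^[i + 1] x) (T.parent^[i] x)
      + recCost T w (T.parent^[n] x) := by
  rw [recCost, recCost, T.depth_iterate_parent hn]
  conv_lhs => rw [← Nat.add_sub_cancel' hn, Finset.sum_range_add]
  congr 1
  refine Finset.sum_congr rfl fun j _ => ?_
  simp only [← Function.iterate_add_apply, Nat.add_right_comm j 1 n, Nat.add_comm j n]

theorem recCost_of_parent_eq_root (T : ArbTree V v0) (w : V → V → ℝ) {x : V}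
    (hx : x ≠ v0) (h : T.parent x = v0) : recCost T w x = w v0 x := by
  rw [recCost, T.depth_eq_one hx h, Finset.sum_range_one, Function.iterate_one, h,
    Function.iterate_zero_apply]

theorem recCost_eq_of_iterate_parent_eq (S T : ArbTree V v0) (w : V → V → ℝ) {x : V}
    (h : ∀ i, S.parent^[i] x = T.parent^[i] x) : recCost S w x = recCost T w x := by
  rw [recCost, recCost, depth_eq_of_iterate_parent_eq S T h]
  exact Finset.sum_congr rfl fun i _ => by rw [h, h]

variable {T T' : ArbTree V v0} {v : V} (hT' : T'.parent = Function.update T.parent v v0)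
include hT'

theorem recCost_reroot_of_iterate_parent_eq (w : V → V → ℝ) (hv : v ≠ v0) {x : V} {n : ℕ}
    (hn : T.parent^[n] x = v) :
    recCost T' w x = recCost T w x - (recCost T w v - w v0 v) := by
  have hbelow : ∀ i < n, T'.parent (T.parent^[i] x) = T.parent (T.parent^[i] x) :=
    fun i hi => by
      rw [hT', Function.update_of_ne]
      exact fun h => hi.ne (T.iterate_parent_injective (hn ▸ hv) (h.trans hn.symm))
  have hpath := Function.iterate_eq_of_forall_lt hbelow
  have hnv' : T'.parent^[n] x = v := by rw [hpath n le_rfl, hn]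
  have hdepth : n ≤ T.depth x := (T.lt_depth_of_iterate_parent_ne_root (hn ▸ hv)).le
  have hdepth' : n ≤ T'.depth x := (T'.lt_depth_of_iterate_parent_ne_root (hnv' ▸ hv)).le
  have hroot' : recCost T' w v = w v0 v :=
    recCost_of_parent_eq_root T' w hv (by rw [hT', Function.update_self])
  have hsum : ∀ i ∈ Finset.range n,
      w (T'.parent^[i + 1] x) (T'.parent^[i] x) = w (T.parent^[i + 1] x) (T.parent^[i] x) :=
    fun i hi => by
      have hi := Finset.mem_range.mp hi
      rw [hpath i hi.le, hpath (i + 1) hi]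
  rw [recCost_eq_sum_add T' w hdepth', recCost_eq_sum_add T w hdepth, hnv', hn, hroot',
    Finset.sum_congr rfl hsum]
  ring

theorem recCost_reroot_of_forall_iterate_parent_ne (w : V → V → ℝ) {x : V}
    (hx : ∀ n, T.parent^[n] x ≠ v) : recCost T' w x = recCost T w x := by
  have hpath : ∀ i, T'.parent^[i] x = T.parent^[i] x := fun i =>
    Function.iterate_eq_of_forall_lt (n := i)
      (fun j _ => by rw [hT', Function.update_of_ne (hx j)]) i le_rfl
  exact recCost_eq_of_iterate_parent_eq T' T w hpath

end recCost

theorem stmt14_general {V : Type} [Fintype V] [DecidableEq V] (v0 : V)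
    (Φ : V → V → ℝ)
    (T : ArbTree V v0) (v : V) (hv : v ≠ v0)
    (T' : ArbTree V v0) (hT' : T'.parent = Function.update T.parent v v0) :
    (∀ x, (∃ n, T.parent^[n] x = v) →
      recCost T' Φ x = recCost T Φ x - (recCost T Φ v - Φ v0 v)) ∧
    (∀ x, ¬ (∃ n, T.parent^[n] x = v) → recCost T' Φ x = recCost T Φ x) ∧
    (∑ x, recCost T' Φ x) = (∑ x, recCost T Φ x) -
      (Nat.card {x : V // ∃ n, T.parent^[n] x = v} : ℝ) *
        (recCost T Φ v - Φ v0 v) := by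
  classical
  have hdesc : ∀ x, (∃ n, T.parent^[n] x = v) →
      recCost T' Φ x = recCost T Φ x - (recCost T Φ v - Φ v0 v) :=
    fun x ⟨_, hn⟩ => recCost_reroot_of_iterate_parent_eq hT' Φ hv hn
  have hrest : ∀ x, ¬ (∃ n, T.parent^[n] x = v) → recCost T' Φ x = recCost T Φ x :=
    fun x hx => recCost_reroot_of_forall_iterate_parent_ne hT' Φ (not_exists.mp hx)
  exact ⟨hdesc, hrest, Finset.sum_eq_sum_sub_card_mul _ _ hdesc hrest⟩

/-- LMG exchange step: replacing the parent edge of `v` by the direct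
edge `(v0, v)` decreases the recreation cost of every descendant of `v` (including `v`)
by exactly `R_T(v) - Φ(v0,v)`, leaves all other recreation costs unchanged, and hence
decreases the total recreation cost by `k * (R_T(v) - Φ(v0,v))` where `k` is the number
of vertices in the subtree rooted at `v`. -/
theorem stmt14 {V : Type} [Fintype V] [DecidableEq V] (v0 : V)
    (Φ : V → V → ℝ) (hΦ : ∀ a b, 0 ≤ Φ a b)
    (T : ArbTree V v0) (v : V) (hv : v ≠ v0)
    (hle : Φ v0 v ≤ recCost T Φ v)
    (T' : ArbTree V v0) (hT' : T'.parent = Function.update T.parent v v0) :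
    (∀ x, (∃ n, T.parent^[n] x = v) →
      recCost T' Φ x = recCost T Φ x - (recCost T Φ v - Φ v0 v)) ∧
    (∀ x, ¬ (∃ n, T.parent^[n] x = v) → recCost T' Φ x = recCost T Φ x) ∧
    (∑ x, recCost T' Φ x) = (∑ x, recCost T Φ x) -
      (Nat.card {x : V // ∃ n, T.parent^[n] x = v} : ℝ) *
        (recCost T Φ v - Φ v0 v) :=
  stmt14_general v0 Φ T v hv T' hT'
end

section
/- If in a spanning tree T rooted at v0 the edge into vertex v is replaced by another edge (u, v) from the graph such that u is not a descendant of v in T, the result T' is again a spanning tree rooted at v0. -/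
private lemma iter_eq_of_avoid {V : Type} [DecidableEq V] (f : V → V) (v u : V)
    (n : ℕ) : ∀ y, (∀ k, k < n → f^[k] y ≠ v) →
    (Function.update f v u)^[n] y = f^[n] y := by
  induction n with
  | zero => intro y _; rfl
  | succ n ih =>
    intro y hy
    rw [Function.iterate_succ_apply, Function.iterate_succ_apply]
    have hy0 : y ≠ v := by simpa using hy 0 (Nat.succ_pos n)
    rw [Function.update_of_ne hy0]
    exact ih (f y) (fun k hk => by
      have := hy (k+1) (Nat.succ_lt_succ hk)
      simpa [Function.iterate_succ_apply] using this)

/-- if the parent edge of a non-root vertex `v` in a spanning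
arborescence `T` is replaced by another graph edge `(u, v)` where `u` is not a
descendant of `v`, then the result is again a spanning arborescence rooted at `v0`. -/
theorem stmt15 {V : Type} [Fintype V] [DecidableEq V]
    (Adj : V → V → Prop) (v0 : V)
    (T : ArbTree V v0) (hT : IsSpanning Adj T)
    (v : V) (hv : v ≠ v0) (u : V) (hAdj : Adj u v)
    (hnd : ¬ ∃ n, T.parent^[n] u = v) :
    Function.update T.parent v u v0 = v0 ∧
    (∀ x, ∃ n, (Function.update T.parent v u)^[n] x = v0) ∧
    (∀ x, x ≠ v0 → Adj (Function.update T.parent v u x) x) := by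
  have hroot : Function.update T.parent v u v0 = v0 := by
    rw [Function.update_of_ne (Ne.symm hv), T.root_fix]
  refine ⟨hroot, ?_, ?_⟩
  · intro x
    by_cases hhit : ∃ k, T.parent^[k] x = v
    · set k := Nat.find hhit with hkdef
      have hk : T.parent^[k] x = v := Nat.find_spec hhit
      have h1 : (Function.update T.parent v u)^[k] x = v := by
        rw [iter_eq_of_avoid T.parent v u k x
          (fun j hj => Nat.find_min hhit hj)]; exact hk
      obtain ⟨m, hm⟩ := T.reaches u
      have h2 : (Function.update T.parent v u)^[m] u = v0 := by
        rw [iter_eq_of_avoid T.parent v u m u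
          (fun j _ => fun he => hnd ⟨j, he⟩)]; exact hm
      refine ⟨m + 1 + k, ?_⟩
      rw [Function.iterate_add_apply, h1, Function.iterate_add_apply,
        Function.iterate_one, Function.update_self, h2]
    · push_neg at hhit
      obtain ⟨n, hn⟩ := T.reaches x
      exact ⟨n, by rw [iter_eq_of_avoid T.parent v u n x (fun j _ => hhit j)]; exact hn⟩
  · intro x hx
    by_cases hxv : x = v
    · subst hxv; rw [Function.update_self]; exact hAdj
    · rw [Function.update_of_ne hxv]; exact hT x hx
end
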